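/- arXiv:2209.08963 — 2 statements merged into one kernel-verified Lean document; each statement's English description precedes it below -/
import Mathlib

section
/- Let λ ⊢ b, μ ⊢ a with μ ⊆ λ, and let T be a standard skew tableau of shape λ/μ. If λ/μ is not a horizontal strip, then there exist entries i < j of T with axial distance a(j,i)(T) = (v_j − u_j) − (v_i − u_i) negative. Conversely, if λ/μ is a horizontal strip, then the tableau T^rev in which entries increase from left to right (reading the cells of the strip in order of increasing column index) is the unique standard skew tableau of shape λ/μ such that a(j,i)(T) > 0 for all 1 ≤ i < j ≤ b−a. -/
open scoped Classical

/-- A partition: a weakly decreasing sequence of naturals that is eventually zero. -/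
def IsPartition (l : ℕ → ℕ) : Prop := Antitone l ∧ ∃ N, ∀ i, N ≤ i → l i = 0

/-- The cells (Young diagram) of a partition, indexed by (row, column), 0-indexed. -/
def cells (l : ℕ → ℕ) : Set (ℕ × ℕ) := {p | p.2 < l p.1}

/-- Containment of (the Young diagrams of) partitions: `m ⊆ l`. -/
def SubDiagram (m l : ℕ → ℕ) : Prop := ∀ i, m i ≤ l i

/-- The skew diagram `l / m`. -/
def skewCells (l m : ℕ → ℕ) : Set (ℕ × ℕ) := cells l \ cells m

/-- A set of cells is a horizontal strip if each column contains at most one cell. -/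
def IsHorizontalStrip (s : Set (ℕ × ℕ)) : Prop :=
  ∀ p ∈ s, ∀ q ∈ s, p.2 = q.2 → p = q

/-- A set of cells is a vertical strip if each row contains at most one cell. -/
def IsVerticalStrip (s : Set (ℕ × ℕ)) : Prop :=
  ∀ p ∈ s, ∀ q ∈ s, p.1 = q.1 → p = q

/-- `λ̄`: the partition obtained from `λ` by deleting its first row. -/
def rowBar (l : ℕ → ℕ) : ℕ → ℕ := fun i => l (i + 1)

/-- `λ'`: the partition obtained from `λ` by deleting its first column. -/
def colBar (l : ℕ → ℕ) : ℕ → ℕ := fun i => l i - 1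

/-- The transpose (conjugate) partition. -/
noncomputable def transposeP (l : ℕ → ℕ) : ℕ → ℕ := fun j => Set.ncard {i | j < l i}

/-- `λ ⊢ n`: a partition of `n`. -/
def IsPartitionOfSize (l : ℕ → ℕ) (n : ℕ) : Prop := IsPartition l ∧ (cells l).ncard = n

/-- intersection of partitions (componentwise min / intersection of diagrams) -/
def interP (l m : ℕ → ℕ) : ℕ → ℕ := fun i => min (l i) (m i)

/-- A standard skew tableau of shape `l/m` with entries `1,…,n` (taking the value `0`
outside the skew diagram): a bijective labelling of the cells of `l/m` by `{1,…,n}`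
which increases along rows and down columns. Taking `m = 0` gives standard Young
tableaux of shape `l`. -/
def IsSkewSYT (l m : ℕ → ℕ) (n : ℕ) (t : ℕ × ℕ → ℕ) : Prop :=
  Set.BijOn t (skewCells l m) (Set.Icc 1 n) ∧
  (∀ p, p ∉ skewCells l m → t p = 0) ∧
  (∀ p ∈ skewCells l m, ∀ q ∈ skewCells l m, p.1 = q.1 → p.2 < q.2 → t p < t q) ∧
  (∀ p ∈ skewCells l m, ∀ q ∈ skewCells l m, p.2 = q.2 → p.1 < q.1 → t p < t q)

/-!
Two cells in one column of a standard tableau have the larger entry in the lower cell, which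
has the smaller content; so if `λ/μ` is not a horizontal strip some axial distance is negative.
In a horizontal strip a cell to the right of another is weakly higher, so content is strictly
increasing in the column index. Positive axial distances then mean exactly that the entries
increase with the column, and a bijection onto `{1, …, n}` increasing along an injective key
is forced: each cell gets the number of cells whose key is at most its own.
-/

section RankLabel

variable {α β : Type*} [LinearOrder β]

noncomputable def rankLabel (s : Finset α) (f : α → β) (p : α) : ℕ :=
  if p ∈ s then (s.filter fun q => f q ≤ f p).card else 0

variable {s : Finset α} {f : α → β}

theorem rankLabel_of_notMem {p : α} (hp : p ∉ s) : rankLabel s f p = 0 :=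
  if_neg hp

theorem rankLabel_lt_rankLabel {p q : α} (hp : p ∈ s) (hq : q ∈ s) (h : f p < f q) :
    rankLabel s f p < rankLabel s f q := by
  rw [rankLabel, if_pos hp, rankLabel, if_pos hq]
  refine Finset.card_lt_card ⟨Finset.monotone_filter_right s fun _ _ hr => hr.trans h.le, ?_⟩
  intro hsub
  have := (Finset.mem_filter.mp (hsub (Finset.mem_filter.mpr ⟨hq, le_rfl⟩))).2
  exact this.not_gt h

theorem bijOn_rankLabel (hf : Set.InjOn f s) :
    Set.BijOn (rankLabel s f) s (Set.Icc 1 s.card) := by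
  have hmaps : Set.MapsTo (rankLabel s f) s (Set.Icc 1 s.card) := fun p hp => by
    rw [Finset.mem_coe] at hp
    rw [rankLabel, if_pos hp]
    exact ⟨Finset.card_pos.mpr ⟨p, Finset.mem_filter.mpr ⟨hp, le_rfl⟩⟩,
      Finset.card_filter_le _ _⟩
  have hinj : Set.InjOn (rankLabel s f) s := fun p hp q hq h => by
    rcases lt_trichotomy (f p) (f q) with hpq | hpq | hpq
    · exact absurd h (rankLabel_lt_rankLabel hp hq hpq).ne
    · exact hf hp hq hpq
    · exact absurd h (rankLabel_lt_rankLabel hq hp hpq).ne'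
  refine ⟨hmaps, hinj, ?_⟩
  simpa using Finset.surjOn_of_injOn_of_card_le (t := Finset.Icc 1 s.card) _
    (by simpa using hmaps) hinj (by simp)

theorem eq_rankLabel_of_bijOn {t : α → ℕ} {n : ℕ}
    (hf : Set.InjOn f s) (ht : Set.BijOn t s (Set.Icc 1 n))
    (hmono : ∀ p ∈ s, ∀ q ∈ s, f p < f q → t p < t q) {p : α} (hp : p ∈ s) :
    t p = rankLabel s f p := by
  have hfilter : s.filter (fun q => f q ≤ f p) = s.filter (fun q => t q ≤ t p) := by
    refine Finset.filter_congr fun q hq => ⟨fun h => ?_, fun h => ?_⟩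
    · rcases h.lt_or_eq with h | h
      · exact (hmono q hq p hp h).le
      · rw [hf hq hp h]
    · exact not_lt.mp fun hpq => (hmono p hp q hq hpq).not_ge h
  have himage : (s.filter fun q => t q ≤ t p).image t = Finset.Icc 1 (t p) := by
    ext k
    simp only [Finset.mem_image, Finset.mem_filter, Finset.mem_Icc]
    constructor
    · rintro ⟨q, ⟨hq, hqp⟩, rfl⟩
      exact ⟨(ht.mapsTo hq).1, hqp⟩
    · rintro ⟨hk, hkp⟩
      obtain ⟨q, hq, rfl⟩ := ht.surjOn ⟨hk, hkp.trans (ht.mapsTo hp).2⟩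
      exact ⟨q, ⟨hq, hkp⟩, rfl⟩
  have hinj : Set.InjOn t ↑(s.filter fun q => t q ≤ t p) :=
    ht.injOn.mono fun q hq => (Finset.mem_filter.mp hq).1
  rw [rankLabel, if_pos hp, hfilter, ← Finset.card_image_of_injOn hinj, himage, Nat.card_Icc,
    Nat.add_sub_cancel]

end RankLabel

theorem Set.InjOn.lt_imp_lt_of_lt_imp_lt {α β γ : Type*} [LinearOrder β] [Preorder γ]
    {s : Set α} {f : α → β} {g : α → γ} (hf : s.InjOn f)
    (h : ∀ p ∈ s, ∀ q ∈ s, f p < f q → g p < g q) :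
    ∀ p ∈ s, ∀ q ∈ s, g p < g q → f p < f q := by
  intro p hp q hq hg
  rcases lt_trichotomy (f p) (f q) with hpq | hpq | hpq
  · exact hpq
  · exact absurd hg (hf hp hq hpq ▸ lt_irrefl _)
  · exact absurd hg (h q hq p hp hpq).not_gt

def content (p : ℕ × ℕ) : ℤ := p.2 - p.1

theorem mem_skewCells {l m : ℕ → ℕ} {p : ℕ × ℕ} :
    p ∈ skewCells l m ↔ p.2 < l p.1 ∧ m p.1 ≤ p.2 := by
  simp [skewCells, cells]

theorem IsPartition.cells_finite {l : ℕ → ℕ} (hl : IsPartition l) : (cells l).Finite := by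
  obtain ⟨hanti, N, hN⟩ := hl
  refine ((Set.finite_Iio N).prod (Set.finite_Iio (l 0))).subset fun p hp => ?_
  have hp : p.2 < l p.1 := hp
  refine ⟨Set.mem_Iio.mpr (not_le.mp fun hNp => ?_), hp.trans_le (hanti (Nat.zero_le _))⟩
  rw [hN _ hNp] at hp
  exact Nat.not_lt_zero _ hp

theorem ncard_skewCells {l m : ℕ → ℕ} {a b : ℕ} (hl : IsPartitionOfSize l b)
    (hm : IsPartitionOfSize m a) (hsub : SubDiagram m l) : (skewCells l m).ncard = b - a := by
  have hcells : cells m ⊆ cells l := fun p (hp : p.2 < m p.1) => hp.trans_le (hsub p.1)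
  rw [skewCells, Set.ncard_sdiff hcells (hl.1.cells_finite.subset hcells), hl.2, hm.2]

theorem exists_content_lt_of_not_isHorizontalStrip {l m : ℕ → ℕ} {n : ℕ}
    {t : ℕ × ℕ → ℕ} (ht : IsSkewSYT l m n t) (hs : ¬ IsHorizontalStrip (skewCells l m)) :
    ∃ p ∈ skewCells l m, ∃ q ∈ skewCells l m, t p < t q ∧ content q < content p := by
  simp only [IsHorizontalStrip, not_forall] at hs
  obtain ⟨p, hp, q, hq, hcol, hne⟩ := hs
  have hrow : p.1 ≠ q.1 := fun h => hne (Prod.ext h hcol)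
  rcases hrow.lt_or_gt with hpq | hpq
  · exact ⟨p, hp, q, hq, ht.2.2.2 p hp q hq hcol hpq, by unfold content; omega⟩
  · exact ⟨q, hq, p, hp, ht.2.2.2 q hq p hp hcol.symm hpq, by unfold content; omega⟩

namespace IsHorizontalStrip

theorem injOn_snd {s : Set (ℕ × ℕ)} (hs : IsHorizontalStrip s) : Set.InjOn Prod.snd s :=
  fun p hp q hq => hs p hp q hq

variable {l m : ℕ → ℕ} {p q : ℕ × ℕ}

theorem fst_le_of_snd_lt (hl : Antitone l) (hs : IsHorizontalStrip (skewCells l m))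
    (hp : p ∈ skewCells l m) (hq : q ∈ skewCells l m) (h : p.2 < q.2) : q.1 ≤ p.1 := by
  rw [mem_skewCells] at hp hq
  by_contra! hpq
  have hcell : (p.1, q.2) ∈ skewCells l m :=
    mem_skewCells.mpr ⟨hq.1.trans_le (hl hpq.le), hp.2.trans h.le⟩
  have := congrArg Prod.fst (hs _ hcell q (mem_skewCells.mpr hq) rfl)
  exact hpq.ne this

theorem content_lt_content (hl : Antitone l) (hs : IsHorizontalStrip (skewCells l m))
    (hp : p ∈ skewCells l m) (hq : q ∈ skewCells l m) (h : p.2 < q.2) :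
    content p < content q := by
  have := hs.fst_le_of_snd_lt hl hp hq h
  unfold content
  omega

theorem forall_content_sub_pos_iff (hl : Antitone l) (hs : IsHorizontalStrip (skewCells l m))
    {t : ℕ × ℕ → ℕ} (ht : Set.InjOn t (skewCells l m)) :
    (∀ p ∈ skewCells l m, ∀ q ∈ skewCells l m, t p < t q → 0 < content q - content p) ↔
      ∀ p ∈ skewCells l m, ∀ q ∈ skewCells l m, p.2 < q.2 → t p < t q := by
  constructor
  · refine fun h => ht.lt_imp_lt_of_lt_imp_lt fun p hp q hq hpq => ?_
    refine hs.injOn_snd.lt_imp_lt_of_lt_imp_lt (fun p hp q hq => hs.content_lt_content hl hp hq)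
      p hp q hq ?_
    exact sub_pos.mp (h p hp q hq hpq)
  · exact fun h p hp q hq hpq => sub_pos.mpr
      (hs.content_lt_content hl hp hq (hs.injOn_snd.lt_imp_lt_of_lt_imp_lt h p hp q hq hpq))

theorem isSkewSYT_rankLabel (hs : IsHorizontalStrip (skewCells l m))
    (hfin : (skewCells l m).Finite) :
    IsSkewSYT l m hfin.toFinset.card (rankLabel hfin.toFinset Prod.snd) := by
  have hbij := bijOn_rankLabel (s := hfin.toFinset) (by simpa using hs.injOn_snd)
  refine ⟨by simpa using hbij, fun p hp => rankLabel_of_notMem (by simpa),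
    fun p hp q hq _ h => rankLabel_lt_rankLabel (by simpa) (by simpa) h,
    fun p hp q hq hpq h => absurd h ?_⟩
  rw [hs p hp q hq hpq]
  exact lt_irrefl _

end IsHorizontalStrip

theorem stmt10_general (a b : ℕ) (l m : ℕ → ℕ)
    (hl : IsPartitionOfSize l b) (hm : IsPartitionOfSize m a) (hsub : SubDiagram m l) :
    (¬ IsHorizontalStrip (skewCells l m) →
      ∀ t, IsSkewSYT l m (b - a) t →
        ∃ p ∈ skewCells l m, ∃ q ∈ skewCells l m, t p < t q ∧
          ((q.2 : ℤ) - (q.1 : ℤ)) - ((p.2 : ℤ) - (p.1 : ℤ)) < 0) ∧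
    (IsHorizontalStrip (skewCells l m) →
      (∃! t, IsSkewSYT l m (b - a) t ∧
        ∀ p ∈ skewCells l m, ∀ q ∈ skewCells l m, t p < t q →
          0 < ((q.2 : ℤ) - (q.1 : ℤ)) - ((p.2 : ℤ) - (p.1 : ℤ))) ∧
      (∀ t, (IsSkewSYT l m (b - a) t ∧
          ∀ p ∈ skewCells l m, ∀ q ∈ skewCells l m, t p < t q →
            0 < ((q.2 : ℤ) - (q.1 : ℤ)) - ((p.2 : ℤ) - (p.1 : ℤ))) →
        ∀ p ∈ skewCells l m, ∀ q ∈ skewCells l m, p.2 < q.2 → t p < t q)) := by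
  refine ⟨fun hs t ht => ?_, fun hs => ?_⟩
  · obtain ⟨p, hp, q, hq, htpq, hc⟩ := exists_content_lt_of_not_isHorizontalStrip ht hs
    exact ⟨p, hp, q, hq, htpq, sub_neg.mpr hc⟩
  have hfin : (skewCells l m).Finite := hl.1.cells_finite.subset Set.sdiff_subset
  have hcard : hfin.toFinset.card = b - a := by
    rw [← Set.ncard_eq_toFinset_card _ hfin, ncard_skewCells hl hm hsub]
  have hrev := hs.isSkewSYT_rankLabel hfin
  rw [hcard] at hrev
  have hmono (t : ℕ × ℕ → ℕ) (ht : IsSkewSYT l m (b - a) t ∧ ∀ p ∈ skewCells l m,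
      ∀ q ∈ skewCells l m, t p < t q → 0 < content q - content p) :
      ∀ p ∈ skewCells l m, ∀ q ∈ skewCells l m, p.2 < q.2 → t p < t q :=
    (hs.forall_content_sub_pos_iff hl.1.1 ht.1.1.injOn).mp ht.2
  refine ⟨⟨rankLabel hfin.toFinset Prod.snd, ⟨hrev, ?_⟩, fun t ht => funext fun p => ?_⟩,
    hmono⟩
  · exact (hs.forall_content_sub_pos_iff hl.1.1 hrev.1.injOn).mpr
      fun p hp q hq => rankLabel_lt_rankLabel (by simpa) (by simpa)
  by_cases hp : p ∈ skewCells l m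
  · exact eq_rankLabel_of_bijOn (s := hfin.toFinset) (by simpa using hs.injOn_snd)
      (by simpa using ht.1.1) (by simpa using hmono t ht) (by simpa using hp)
  · rw [ht.1.2.1 p hp, hrev.2.1 p hp]

/-- Let `μ ⊆ λ` with `λ ⊢ b`, `μ ⊢ a`.  If `λ/μ` is not a horizontal strip then every
standard skew tableau of shape `λ/μ` has entries `i < j` with negative axial distance
`a(j,i)`.  Conversely, if `λ/μ` is a horizontal strip, there is a unique standard skew
tableau all of whose axial distances `a(j,i)` (for entries `i < j`) are positive,
namely the tableau `T^rev` in which entries increase from left to right. -/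
theorem stmt10 (a b : ℕ) (hab : a ≤ b) (l m : ℕ → ℕ)
    (hl : IsPartitionOfSize l b) (hm : IsPartitionOfSize m a) (hsub : SubDiagram m l) :
    (¬ IsHorizontalStrip (skewCells l m) →
      ∀ t, IsSkewSYT l m (b - a) t →
        ∃ p ∈ skewCells l m, ∃ q ∈ skewCells l m, t p < t q ∧
          ((q.2 : ℤ) - (q.1 : ℤ)) - ((p.2 : ℤ) - (p.1 : ℤ)) < 0) ∧
    (IsHorizontalStrip (skewCells l m) →
      (∃! t, IsSkewSYT l m (b - a) t ∧
        ∀ p ∈ skewCells l m, ∀ q ∈ skewCells l m, t p < t q →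
          0 < ((q.2 : ℤ) - (q.1 : ℤ)) - ((p.2 : ℤ) - (p.1 : ℤ))) ∧
      (∀ t, (IsSkewSYT l m (b - a) t ∧
          ∀ p ∈ skewCells l m, ∀ q ∈ skewCells l m, t p < t q →
            0 < ((q.2 : ℤ) - (q.1 : ℤ)) - ((p.2 : ℤ) - (p.1 : ℤ))) →
        ∀ p ∈ skewCells l m, ∀ q ∈ skewCells l m, p.2 < q.2 → t p < t q)) :=
  stmt10_general a b l m hl hm hsub
end

section
/- Let k be a field of characteristic zero and let Hom_FI(a−1, b) ↑ denote the S_b × S_a-module induced from the S_b × S_{a−1}-permutation module on injections Fin (a−1) ↪ Fin b along S_{a−1} ⊆ S_a, for 1 ≤ a ≤ b. A simple S_b × S_a-module S^λ ⊠ S^ν that occurs in k[Hom_FI(a,b)] fails to occur as a composition factor of Hom_FI(a−1,b) ↑ if and only if ν = λ̄ and λ_1 = b − a. -/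
open scoped Classical

open Equiv

/-- `Fin a` is equivalent to the subtype of `Fin b` of elements `< a`. -/
def finCastEquiv (a b : ℕ) (hab : a ≤ b) : Fin a ≃ {x : Fin b // (x : ℕ) < a} where
  toFun i := ⟨⟨i, lt_of_lt_of_le i.isLt hab⟩, i.isLt⟩
  invFun x := ⟨x.1, x.2⟩
  left_inv _ := rfl
  right_inv _ := rfl

/-- The inclusion `S_a ⊆ S_b` (extending a permutation of `{0,…,a-1}` by the identity). -/
def extPerm {a b : ℕ} (hab : a ≤ b) : Equiv.Perm (Fin a) →* Equiv.Perm (Fin b) :=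
  Equiv.Perm.extendDomainHom (finCastEquiv a b hab)

/-- `(g,h) • f = g ∘ f ∘ h⁻¹` on injections `Fin a ↪ Fin b`. -/
def injSmul {a b : ℕ} (g : Equiv.Perm (Fin b) × Equiv.Perm (Fin a))
    (f : Fin a ↪ Fin b) : Fin a ↪ Fin b :=
  ((g.2⁻¹.toEmbedding).trans f).trans g.1.toEmbedding

@[simp] theorem injSmul_apply {a b : ℕ} (g : Equiv.Perm (Fin b) × Equiv.Perm (Fin a))
    (f : Fin a ↪ Fin b) (x : Fin a) : injSmul g f x = g.1 (f (g.2⁻¹ x)) := rfl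

/-- The action of `S_b × S_a` on injections `Fin a ↪ Fin b`. -/
instance injMulAction (a b : ℕ) :
    MulAction (Equiv.Perm (Fin b) × Equiv.Perm (Fin a)) (Fin a ↪ Fin b) where
  smul := injSmul
  one_smul f := Function.Embedding.ext fun x => by
    show injSmul 1 f x = f x
    simp
  mul_smul g h f := Function.Embedding.ext fun x => by
    show injSmul _ f _ = injSmul g (injSmul h f) x
    simp [Equiv.Perm.mul_apply, mul_inv_rev]

theorem injSmul_def (a b : ℕ) (g : Equiv.Perm (Fin b) × Equiv.Perm (Fin a))
    (f : Fin a ↪ Fin b) : g • f = injSmul g f := rfl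

open Equiv TensorProduct

/-- Functions `Fin n → ℕ` whose fiber over `j` has cardinality `l j`; the `S_n`-set whose
permutation module is the Young module `M^l` (induced from the trivial module of the
Young subgroup of shape `l`). -/
def YoungSet (n : ℕ) (l : ℕ → ℕ) : Type :=
  {f : Fin n → ℕ // ∀ j, (Finset.univ.filter (fun i => f i = j)).card = l j}

instance youngAction (n : ℕ) (l : ℕ → ℕ) :
    MulAction (Equiv.Perm (Fin n)) (YoungSet n l) where
  smul g f := ⟨fun i => f.1 (g⁻¹ i), by
    intro j
    rw [← f.2 j]
    apply Finset.card_bij (fun i _ => g⁻¹ i)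
    · intro i hi
      simp only [Finset.mem_filter, Finset.mem_univ, true_and] at hi ⊢
      exact hi
    · intro i _ i' _ h
      exact g⁻¹.injective h
    · intro i hi
      simp only [Finset.mem_filter, Finset.mem_univ, true_and] at hi ⊢
      exact ⟨g i, by simpa using hi, by simp⟩⟩
  one_smul f := Subtype.ext (funext fun i => by
    show f.1 ((1 : Equiv.Perm (Fin n))⁻¹ i) = f.1 i
    simp)
  mul_smul g h f := Subtype.ext (funext fun i => by
    show f.1 ((g * h)⁻¹ i) = f.1 (h⁻¹ (g⁻¹ i))
    simp [mul_inv_rev, Equiv.Perm.mul_apply])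

/-- The (characterizing) property of being the Specht module `S^l` of `S_n` over `k`:
an irreducible module admitting a nonzero equivariant map to the Young permutation
module `M^l`, and a nonzero sign-twisted equivariant map to `M^{lᵗ}`.  In characteristic
zero this characterizes `S^l` up to isomorphism, with the convention that `S^{(n)}` is
trivial and `S^{(1ⁿ)}` is the sign representation. -/
def IsSpechtRep (k : Type) [Field k] {n : ℕ} {V : Type} [AddCommGroup V] [Module k V]
    (ρ : Representation k (Equiv.Perm (Fin n)) V) (l : ℕ → ℕ) : Prop :=
  IsSimpleModule (MonoidAlgebra k (Equiv.Perm (Fin n))) ρ.asModule ∧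
  (∃ φ : V →ₗ[k] (YoungSet n l →₀ k), φ ≠ 0 ∧
    ∀ g v, φ (ρ g v) =
      MonoidAlgebra.coeffLinearEquiv k (Representation.ofMulAction k (Equiv.Perm (Fin n)) (YoungSet n l) g
        ((MonoidAlgebra.coeffLinearEquiv k).symm (φ v)))) ∧
  (∃ ψ : V →ₗ[k] (YoungSet n (transposeP l) →₀ k), ψ ≠ 0 ∧
    ∀ g v, ψ (ρ g v) = ((Equiv.Perm.sign g : ℤ) : k) •
      MonoidAlgebra.coeffLinearEquiv k (Representation.ofMulAction k (Equiv.Perm (Fin n)) (YoungSet n (transposeP l)) g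
        ((MonoidAlgebra.coeffLinearEquiv k).symm (ψ v))))

/-- The exterior tensor product `ρ ⊠ σ` of representations of `G` and `H`,
a representation of `G × H`. -/
noncomputable def boxtimes {k G H V W : Type} [CommRing k] [Monoid G] [Monoid H]
    [AddCommGroup V] [Module k V] [AddCommGroup W] [Module k W]
    (ρ : Representation k G V) (σ : Representation k H W) :
    Representation k (G × H) (TensorProduct k V W) :=
  Representation.tprod (ρ.comp (MonoidHom.fst G H)) (σ.comp (MonoidHom.snd G H))

/-- The submodule of vectors invariant under the action of a subset `S` of the group. -/
def invariantsUnder {k G V : Type} [CommRing k] [Monoid G] [AddCommGroup V] [Module k V]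
    (ρ : Representation k G V) (S : Set G) : Submodule k V where
  carrier := {v | ∀ g ∈ S, ρ g v = v}
  add_mem' := by
    intro x y hx hy g hg
    rw [map_add, hx g hg, hy g hg]
  zero_mem' := by
    intro g hg
    rw [map_zero]
  smul_mem' := by
    intro c x hx g hg
    rw [map_smul, hx g hg]

/-!
Let `w = φ(e_{F₀})` for the standard injection `F₀ : Fin a ↪ Fin b`; it is nonzero and fixed by
the stabiliser of `F₀`. Embedding `S^λ` into the permutation module `M^λ` and, sign-twisted, into
`M^{λᵗ}` (and `S^ν` likewise) turns `w` into a function on pairs of tabloids; a point of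
`YoungSet n λ` records the row of each entry, a point of `YoungSet n λᵗ` its column. An element of
the stabiliser that fixes a pair of tabloids but acts with sign `-1` forces that pair out of the
support (characteristic zero).

In the `M^{λᵗ} ⊗ M^ν` picture the `b - a` points outside the image of `F₀` lie in distinct
columns, so `λ₁ ≥ b - a`. If `S^λ ⊠ S^ν` does not occur in the induced module, `φ` composed with
the pullback along restriction `Inj(a, b) → Inj(a - 1, b)` vanishes, a linear relation among
translates of `w`. In the `M^λ ⊗ M^{νᵗ}` picture, take a support element with the most first-row
entries outside the image of `F₀`; the relation shows that its whole first row lies there, so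
`λ₁ ≤ b - a`. Then the two pictures bound the partial sums of `ν` and of `λ̄` by each other,
hence `ν = λ̄`.

Conversely, if `λ₁ = b - a` and `ψ(e_f) ≠ 0`, then `ψ(e_f)` is fixed by the transpositions of the
`b - a + 1` points outside the image of `f`; two of them share a column of any tabloid in the
support of the `M^{λᵗ} ⊗ M^ν` picture, and their transposition kills that coefficient.
-/

open Finset

namespace IsPartition

variable {l : ℕ → ℕ}

theorem lt_transposeP_iff (hl : IsPartition l) (j t : ℕ) : t < transposeP l j ↔ j < l t := by
  obtain ⟨hanti, N, hN⟩ := hl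
  have hex : ∃ i, l i ≤ j := ⟨N, by rw [hN N le_rfl]; exact Nat.zero_le _⟩
  have hrows : {i | j < l i} = ↑(range (Nat.find hex)) := by
    ext i
    simp only [Set.mem_ofPred_eq, coe_range, Set.mem_Iio, Nat.lt_find_iff, not_le]
    exact ⟨fun hi t ht => hi.trans_le (hanti ht), fun h => h i le_rfl⟩
  rw [transposeP, hrows, Set.ncard_coe_finset, card_range, Nat.lt_find_iff]
  exact ⟨fun h => not_le.1 (h t le_rfl), fun h s hs => not_le.2 (h.trans_le (hanti hs))⟩

theorem rowBar (hl : IsPartition l) : IsPartition (rowBar l) :=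
  ⟨fun _ _ h => hl.1 (Nat.succ_le_succ h), hl.2.imp fun _ hN i hi => hN _ (by omega)⟩

theorem transposeP_rowBar (hl : IsPartition l) (j : ℕ) :
    transposeP (_root_.rowBar l) j = transposeP l j - 1 := by
  have hsucc : ∀ t, t < transposeP (_root_.rowBar l) j ↔ t + 1 < transposeP l j := fun t => by
    rw [hl.rowBar.lt_transposeP_iff, hl.lt_transposeP_iff]; rfl
  apply le_antisymm
  · by_contra! h
    have := (hsucc (transposeP l j - 1)).1 h
    omega
  · by_contra! h
    have := (hsucc (transposeP (_root_.rowBar l) j)).2 (by omega)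
    omega

theorem sum_min_transposeP (hl : IsPartition l) (n : ℕ) {N : ℕ} (hN : l 0 ≤ N) :
    ∑ j ∈ range N, min n (transposeP l j) = ∑ t ∈ range n, l t := by
  have hcol : ∀ j, min n (transposeP l j) = ∑ t ∈ range n, if j < l t then 1 else 0 := by
    intro j
    have : {t ∈ range n | j < l t} = range (min n (transposeP l j)) := by
      ext t
      simp [hl.lt_transposeP_iff]
    rw [sum_boole, this, card_range, Nat.cast_id]
  have hrow : ∀ t, ∑ j ∈ range N, (if j < l t then 1 else 0) = l t := by
    intro t
    have : {j ∈ range N | j < l t} = range (l t) := by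
      ext j
      have : l t ≤ l 0 := hl.1 (Nat.zero_le t)
      simp only [mem_filter, mem_range]
      omega
    rw [sum_boole, this, card_range, Nat.cast_id]
  simp_rw [hcol]
  rw [sum_comm]
  exact sum_congr rfl fun t _ => hrow t

end IsPartition

namespace YoungSet

variable {n : ℕ} {l : ℕ → ℕ}

theorem smul_val (g : Perm (Fin n)) (T : YoungSet n l) (p : Fin n) :
    (g • T).1 p = T.1 (g⁻¹ p) := rfl

theorem card_filter_val_eq (T : YoungSet n l) (j : ℕ) : #{p | T.1 p = j} = l j := T.2 j

theorem swap_smul_of_val_eq {T : YoungSet n l} {p q : Fin n} (h : T.1 p = T.1 q) :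
    swap p q • T = T :=
  Subtype.ext <| funext fun r => by
    rw [smul_val, swap_inv, swap_apply_def]
    split_ifs <;> simp_all

theorem val_lt (hl : IsPartition l) (T : YoungSet n (transposeP l)) (p : Fin n) :
    T.1 p < l 0 := by
  rw [← hl.lt_transposeP_iff, ← T.card_filter_val_eq, card_pos]
  exact ⟨p, by simp⟩

end YoungSet

theorem card_filter_mem_le_sum_range {μ : ℕ → ℕ} (hμ : IsPartition μ) {n : ℕ} (X Y : Fin n → ℕ)
    (hXY : Function.Injective fun q => (X q, Y q)) (hY : ∀ j, #{q | Y q = j} ≤ transposeP μ j)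
    (s : Finset ℕ) : #{q | X q ∈ s} ≤ ∑ t ∈ range #s, μ t := by
  have hYlt : ∀ q, Y q < μ 0 := fun q =>
    (hμ.lt_transposeP_iff _ 0).1 <| (card_pos.2 ⟨q, by simp⟩).trans_le (hY (Y q))
  rw [← hμ.sum_min_transposeP #s le_rfl,
    card_eq_sum_card_fiberwise (f := Y) (t := range (μ 0)) fun q _ => mem_range.2 (hYlt q)]
  refine sum_le_sum fun j _ => le_min ?_ ?_
  · refine card_le_card_of_injOn X (fun q hq => by simp_all) fun q hq q' hq' hX => hXY ?_
    simp_all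
  · exact (card_le_card fun q => by simp_all).trans (hY j)

section Embeddings

variable {a b n : ℕ}

theorem smul_embedding_apply (g : Perm (Fin b) × Perm (Fin n)) (f : Fin n ↪ Fin b) (i : Fin n) :
    (g • f) i = g.1 (f (g.2⁻¹ i)) := rfl

theorem smul_embedding_eq_self_iff {g : Perm (Fin b)} {h : Perm (Fin n)} {f : Fin n ↪ Fin b} :
    (g, h) • f = f ↔ ∀ i, g (f i) = f (h i) := by
  simp only [DFunLike.ext_iff, smul_embedding_apply]
  exact ⟨fun H i => by simpa using H (h i), fun H i => by simpa using H (h⁻¹ i)⟩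

theorem swap_smul_embedding_eq_self {f : Fin n ↪ Fin b} {p q : Fin b} (hp : p ∉ Set.range f)
    (hq : q ∉ Set.range f) : (swap p q, (1 : Perm (Fin n))) • f = f :=
  smul_embedding_eq_self_iff.2 fun i =>
    swap_apply_of_ne_of_ne (fun h => hp ⟨i, h⟩) (fun h => hq ⟨i, h⟩)

theorem swap_smul_castLEEmb (hab : a ≤ b) (q q' : Fin a) :
    (swap (Fin.castLE hab q) (Fin.castLE hab q'), swap q q') • Fin.castLEEmb hab =
      Fin.castLEEmb hab :=
  smul_embedding_eq_self_iff.2 fun i => (Fin.castLE_injective hab).swap_apply q q' i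

theorem exists_smul_embedding_eq (f f' : Fin n ↪ Fin b) :
    ∃ g : Perm (Fin b), (g, (1 : Perm (Fin n))) • f = f' := by
  obtain ⟨g, hg⟩ := Perm.exists_smul_eq_embedding f f'
  exact ⟨g, by rw [← hg]; ext; simp [smul_embedding_apply, Function.Embedding.smul_apply]⟩

theorem extPerm_castLE (hab : a ≤ b) (h : Perm (Fin a)) (i : Fin a) :
    extPerm hab h (Fin.castLE hab i) = Fin.castLE hab (h i) :=
  Perm.extendDomain_apply_image h (finCastEquiv a b hab) i

def restrictEmb (f : Fin a ↪ Fin b) : Fin (a - 1) ↪ Fin b :=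
  (Fin.castLEEmb (Nat.sub_le a 1)).trans f

theorem restrictEmb_smul (g : Perm (Fin b)) (h : Perm (Fin (a - 1))) (f : Fin a ↪ Fin b) :
    restrictEmb ((g, extPerm (Nat.sub_le a 1) h) • f) = (g, h) • restrictEmb f := by
  ext i
  simp [restrictEmb, smul_embedding_apply, ← map_inv, extPerm_castLE]

theorem card_filter_le_val (hab : a ≤ b) : #{p : Fin b | a ≤ (p : ℕ)} = b - a := by
  have hlow := Fin.card_filter_val_lt (n := b) (m := a)
  have hsplit := card_filter_add_card_filter_not (s := univ) (p := fun p : Fin b => (p : ℕ) < a)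
  simp only [not_lt, card_univ, Fintype.card_fin] at hsplit
  omega

end Embeddings

instance (a b : ℕ) : MulAction.IsPretransitive (Perm (Fin b) × Perm (Fin a)) (Fin a ↪ Fin b) :=
  ⟨fun f f' => (exists_smul_embedding_eq f f').elim fun g hg => ⟨(g, 1), hg⟩⟩

section PermutationModules

variable {k : Type} [Field k] {G H V W X Y : Type} [Group G] [Group H] [MulAction G X]
  [MulAction H Y] [AddCommGroup V] [Module k V] [AddCommGroup W] [Module k W]

theorem coeffLinearEquiv_ofMulAction (g : G) (f : X →₀ k) :
    MonoidAlgebra.coeffLinearEquiv k (Representation.ofMulAction k G X g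
      ((MonoidAlgebra.coeffLinearEquiv k).symm f)) = f.mapDomain (g • ·) := by
  simp [Representation.ofMulAction_def]

theorem mapDomain_smul_apply_smul (g : G) (f : X →₀ k) (x : X) :
    f.mapDomain (g • ·) (g • x) = f x :=
  Finsupp.mapDomain_apply (MulAction.injective g) f x

theorem eq_zero_of_apply_single_eq_zero [MulAction.IsPretransitive G X]
    (ρ : Representation k G V) {φ : (X →₀ k) →ₗ[k] V}
    (hφ : ∀ g f, φ (f.mapDomain (g • ·)) = ρ g (φ f)) {x₀ : X} (h₀ : φ (Finsupp.single x₀ 1) = 0) :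
    φ = 0 := by
  refine Finsupp.lhom_ext' fun x => LinearMap.ext_ring ?_
  obtain ⟨g, rfl⟩ := MulAction.exists_smul_eq G x₀ x
  simp [← Finsupp.mapDomain_single, hφ, h₀]

variable (k) in
def IsTwistedPermMap (ρ : Representation k G V) (c : G → k) (φ : V →ₗ[k] (X →₀ k)) : Prop :=
  ∀ g v, φ (ρ g v) = c g • (φ v).mapDomain (g • ·)

theorem IsTwistedPermMap.injective {ρ : Representation k G V} {c : G → k} {φ : V →ₗ[k] (X →₀ k)}
    (hφ : IsTwistedPermMap k ρ c φ) [IsSimpleModule (MonoidAlgebra k G) ρ.asModule] (h0 : φ ≠ 0) :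
    Function.Injective φ := by
  have : ρ.IsIrreducible := (ρ.irreducible_iff_isSimpleModule_asModule).2 ‹_›
  let K : Subrepresentation ρ :=
    ⟨LinearMap.ker φ, fun g v (hv : φ v = 0) => by simp [LinearMap.mem_ker, hφ g v, hv]⟩
  rcases eq_bot_or_eq_top K with h | h
  · exact LinearMap.ker_eq_bot.1 (congrArg Subrepresentation.toSubmodule h)
  · exact absurd (LinearMap.ker_eq_top.1 (congrArg Subrepresentation.toSubmodule h)) h0

end PermutationModules

section Specht

variable {k : Type} [Field k] {n : ℕ} {V : Type} [AddCommGroup V] [Module k V]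
  {ρ : Representation k (Perm (Fin n)) V} {l : ℕ → ℕ}

theorem IsSpechtRep.exists_injective_young (hρ : IsSpechtRep k ρ l) :
    ∃ φ : V →ₗ[k] (YoungSet n l →₀ k), Function.Injective φ ∧ IsTwistedPermMap k ρ 1 φ := by
  obtain ⟨hsimple, ⟨φ, hφ0, hφ⟩, -⟩ := hρ
  have hφ' : IsTwistedPermMap k ρ 1 φ := fun g v => by
    rw [hφ, coeffLinearEquiv_ofMulAction, Pi.one_apply, one_smul]
  exact ⟨φ, hφ'.injective hφ0, hφ'⟩

theorem IsSpechtRep.exists_injective_young_transposeP (hρ : IsSpechtRep k ρ l) :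
    ∃ ψ : V →ₗ[k] (YoungSet n (transposeP l) →₀ k), Function.Injective ψ ∧
      IsTwistedPermMap k ρ (fun g => ((Perm.sign g : ℤ) : k)) ψ := by
  obtain ⟨hsimple, -, ⟨ψ, hψ0, hψ⟩⟩ := hρ
  have hψ' : IsTwistedPermMap k ρ (fun g => ((Perm.sign g : ℤ) : k)) ψ := fun g v => by
    rw [hψ, coeffLinearEquiv_ofMulAction]
  exact ⟨ψ, hψ'.injective hψ0, hψ'⟩

end Specht

section TensorFinsupp

variable {k : Type} [Field k] {G H V W X Y : Type} [Group G] [Group H] [MulAction G X]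
  [MulAction H Y] [AddCommGroup V] [Module k V] [AddCommGroup W] [Module k W]
  {ρ : Representation k G V} {σ : Representation k H W} {cα : G → k} {cβ : H → k}
  {α : V →ₗ[k] (X →₀ k)} {β : W →ₗ[k] (Y →₀ k)}

variable (α β) in
noncomputable def tensorFinsupp : V ⊗[k] W →ₗ[k] (X × Y →₀ k) :=
  (finsuppTensorFinsupp' k X Y).toLinearMap ∘ₗ TensorProduct.map α β

theorem tensorFinsupp_injective (hα : Function.Injective α) (hβ : Function.Injective β) :
    Function.Injective (tensorFinsupp α β) :=
  (finsuppTensorFinsupp' k X Y).injective.comp (TensorProduct.map_injective_of_flat_flat α β hα hβ)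

theorem IsTwistedPermMap.tensorFinsupp_boxtimes_apply (hα : IsTwistedPermMap k ρ cα α)
    (hβ : IsTwistedPermMap k σ cβ β) (g : G) (h : H) (t : V ⊗[k] W) (x : X) (y : Y) :
    tensorFinsupp α β (boxtimes ρ σ (g, h) t) (g • x, h • y) =
      cα g * cβ h * tensorFinsupp α β t (x, y) := by
  induction t using TensorProduct.induction_on with
  | zero => simp
  | add t t' ht ht' => simp only [map_add, Finsupp.add_apply, ht, ht', mul_add]
  | tmul v w =>
    simp only [boxtimes, Representation.tprod_apply, tensorFinsupp, LinearMap.comp_apply,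
      TensorProduct.map_tmul, LinearEquiv.coe_coe, finsuppTensorFinsupp'_apply_apply,
      MonoidHom.comp_apply, MonoidHom.coe_fst, MonoidHom.coe_snd]
    rw [hα g v, hβ h w]
    simp only [Finsupp.smul_apply, smul_eq_mul, mapDomain_smul_apply_smul]
    ring

theorem IsTwistedPermMap.tensorFinsupp_apply_eq_zero [CharZero k] (hα : IsTwistedPermMap k ρ cα α)
    (hβ : IsTwistedPermMap k σ cβ β) {g : G} {h : H} {t : V ⊗[k] W} {x : X} {y : Y}
    (ht : boxtimes ρ σ (g, h) t = t) (hx : g • x = x) (hy : h • y = y) (hc : cα g * cβ h = -1) :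
    tensorFinsupp α β t (x, y) = 0 := by
  have := hα.tensorFinsupp_boxtimes_apply hβ g h t x y
  rwa [ht, hx, hy, hc, neg_one_mul, CharZero.eq_neg_self_iff] at this

end TensorFinsupp

section Induction

variable {k : Type} [Field k] {a b : ℕ} {V W : Type} [AddCommGroup V] [Module k V]
  [AddCommGroup W] [Module k W] {ρ : Representation k (Perm (Fin b)) V}
  {σ : Representation k (Perm (Fin a)) W}

variable (k a b) in
noncomputable def restrictPullback :
    ((Fin (a - 1) ↪ Fin b) →₀ k) →ₗ[k] ((Fin a ↪ Fin b) →₀ k) :=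
  (Finsupp.linearEquivFunOnFinite k k _).symm.toLinearMap ∘ₗ
    LinearMap.funLeft k k restrictEmb ∘ₗ (Finsupp.linearEquivFunOnFinite k k _).toLinearMap

theorem restrictPullback_apply (x : (Fin (a - 1) ↪ Fin b) →₀ k) (f : Fin a ↪ Fin b) :
    restrictPullback k a b x f = x (restrictEmb f) := rfl

theorem restrictPullback_mapDomain_smul (g : Perm (Fin b)) (h : Perm (Fin (a - 1)))
    (x : (Fin (a - 1) ↪ Fin b) →₀ k) :
    restrictPullback k a b (x.mapDomain ((g, h) • ·)) =
      (restrictPullback k a b x).mapDomain ((g, extPerm (Nat.sub_le a 1) h) • ·) := by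
  ext f
  rw [← smul_inv_smul (g, extPerm (Nat.sub_le a 1) h) f, mapDomain_smul_apply_smul,
    restrictPullback_apply, restrictPullback_apply, restrictEmb_smul, mapDomain_smul_apply_smul]

variable (ρ σ) in
/-- By Frobenius reciprocity, `ρ ⊠ σ` occurs in `Ind_{S_b × S_{a-1}}^{S_b × S_a} k[Inj(a-1, b)]`
iff it receives a nonzero `S_b × S_{a-1}`-map from `k[Inj(a-1, b)]`, with `S_{a-1} ⊆ S_a`. -/
def OccursInInduced : Prop :=
  ∃ ψ : ((Fin (a - 1) ↪ Fin b) →₀ k) →ₗ[k] V ⊗[k] W, ψ ≠ 0 ∧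
    ∀ g h x, ψ (x.mapDomain ((g, h) • ·)) = boxtimes ρ σ (g, extPerm (Nat.sub_le a 1) h) (ψ x)

theorem restrictPullback_single (f : Fin (a - 1) ↪ Fin b) :
    restrictPullback k a b (Finsupp.single f 1) =
      ∑ F ∈ {F | restrictEmb F = f}, Finsupp.single F 1 := by
  ext F
  simp [restrictPullback_apply, Finsupp.finsetSum_apply, Finsupp.single_apply, eq_comm]

theorem filter_restrictEmb_eq_image_swap (ha : 1 ≤ a) (hab : a ≤ b) :
    ({F | restrictEmb F = Fin.castLEEmb ((Nat.sub_le a 1).trans hab)} : Finset (Fin a ↪ Fin b)) =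
      image (fun x => (swap ⟨a - 1, by omega⟩ x, (1 : Perm (Fin a))) • Fin.castLEEmb hab)
        {x : Fin b | a - 1 ≤ (x : ℕ)} := by
  ext F
  simp only [mem_filter, mem_univ, true_and, mem_image]
  constructor
  · intro hF
    have hlow : ∀ i : Fin a, (i : ℕ) < a - 1 → F i = Fin.castLE hab i := fun i hi => by
      simpa [restrictEmb, Fin.ext_iff] using DFunLike.congr_fun hF ⟨i, hi⟩
    have hne : ∀ i : Fin a, (i : ℕ) < a - 1 → F i ≠ F ⟨a - 1, by omega⟩ := fun i hi h => by
      simpa [Fin.ext_iff, hi.ne] using F.injective h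
    set ℓ : Fin a := ⟨a - 1, by omega⟩
    refine ⟨F ℓ, ?_, DFunLike.ext _ _ fun i => ?_⟩
    · by_contra! h
      refine hne ⟨F ℓ, by omega⟩ h (Fin.ext ?_)
      simp [hlow ⟨F ℓ, by omega⟩ h]
    · simp only [smul_embedding_apply, inv_one, Perm.one_apply, Fin.castLEEmb_apply]
      by_cases hi : (i : ℕ) < a - 1
      · rw [← hlow i hi, swap_apply_of_ne_of_ne _ (hne i hi)]
        simp [hlow i hi, Fin.ext_iff, hi.ne]
      · rw [show i = ℓ from Fin.ext (by simp [ℓ]; omega)]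
        exact swap_apply_left _ _
  · rintro ⟨x, hx, rfl⟩
    ext i
    simp only [restrictEmb, Function.Embedding.trans_apply, smul_embedding_apply, inv_one,
      Perm.one_apply, Fin.castLEEmb_apply]
    rw [swap_apply_of_ne_of_ne] <;> simp [Fin.ext_iff] <;> omega

theorem sum_boxtimes_swap_eq_zero (ha : 1 ≤ a) (hab : a ≤ b)
    {φ : ((Fin a ↪ Fin b) →₀ k) →ₗ[k] V ⊗[k] W}
    (hφ : ∀ g x, φ (x.mapDomain (g • ·)) = boxtimes ρ σ g (φ x))
    (hnot : ¬ OccursInInduced ρ σ) :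
    ∑ x ∈ {x : Fin b | a - 1 ≤ (x : ℕ)},
      boxtimes ρ σ (swap ⟨a - 1, by omega⟩ x, 1) (φ (Finsupp.single (Fin.castLEEmb hab) 1)) =
        0 := by
  have hψ : φ ∘ₗ restrictPullback k a b = 0 := by
    by_contra h
    exact hnot ⟨_, h, fun g h x => by simp [restrictPullback_mapDomain_smul, hφ]⟩
  have := DFunLike.congr_fun hψ (Finsupp.single (Fin.castLEEmb ((Nat.sub_le a 1).trans hab)) 1)
  rw [LinearMap.comp_apply, restrictPullback_single, filter_restrictEmb_eq_image_swap ha hab,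
    sum_image fun x _ y _ hxy => ?_, map_sum] at this
  · simpa [← Finsupp.mapDomain_single, hφ] using this
  · have hℓ := DFunLike.congr_fun hxy ⟨a - 1, by omega⟩
    change swap _ x ⟨a - 1, _⟩ = swap _ y ⟨a - 1, _⟩ at hℓ
    simpa using hℓ

end Induction

section Support

variable {k : Type} [Field k] [CharZero k] {a b : ℕ} {V W : Type} [AddCommGroup V] [Module k V]
  [AddCommGroup W] [Module k W] {ρ : Representation k (Perm (Fin b)) V}
  {σ : Representation k (Perm (Fin a)) W} {A B : ℕ → ℕ} {cα : Perm (Fin b) → k}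
  {cβ : Perm (Fin a) → k} {α : V →ₗ[k] (YoungSet b A →₀ k)} {β : W →ₗ[k] (YoungSet a B →₀ k)}
  {w : V ⊗[k] W} {T : YoungSet b A} {S : YoungSet a B}

theorem injOn_high_of_tensorFinsupp_ne_zero (hab : a ≤ b) (hα : IsTwistedPermMap k ρ cα α)
    (hβ : IsTwistedPermMap k σ cβ β)
    (hw : ∀ g h, (g, h) • Fin.castLEEmb hab = Fin.castLEEmb hab → boxtimes ρ σ (g, h) w = w)
    (hc : ∀ p q : Fin b, p ≠ q → cα (swap p q) * cβ 1 = -1)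
    (hTS : tensorFinsupp α β w (T, S) ≠ 0) : Set.InjOn T.1 {p | a ≤ (p : ℕ)} := by
  intro p hp q hq hpq
  by_contra hne
  have hlow : ∀ r : Fin b, a ≤ (r : ℕ) → r ∉ Set.range (Fin.castLEEmb hab) := fun r hr => by
    simpa [Fin.range_castLE] using hr
  exact hTS <| hα.tensorFinsupp_apply_eq_zero hβ
    (hw _ _ (swap_smul_embedding_eq_self (hlow p hp) (hlow q hq)))
    (YoungSet.swap_smul_of_val_eq hpq) (one_smul _ _) (hc p q hne)

theorem pair_injective_of_tensorFinsupp_ne_zero (hab : a ≤ b) (hα : IsTwistedPermMap k ρ cα α)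
    (hβ : IsTwistedPermMap k σ cβ β)
    (hw : ∀ g h, (g, h) • Fin.castLEEmb hab = Fin.castLEEmb hab → boxtimes ρ σ (g, h) w = w)
    (hc : ∀ q q' : Fin a, q ≠ q' →
      cα (swap (Fin.castLE hab q) (Fin.castLE hab q')) * cβ (swap q q') = -1)
    (hTS : tensorFinsupp α β w (T, S) ≠ 0) :
    Function.Injective fun q => (T.1 (Fin.castLE hab q), S.1 q) := by
  intro q q' hqq'
  by_contra hne
  simp only [Prod.mk.injEq] at hqq'
  exact hTS <| hα.tensorFinsupp_apply_eq_zero hβ (hw _ _ (swap_smul_castLEEmb hab q q'))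
    (YoungSet.swap_smul_of_val_eq hqq'.1) (YoungSet.swap_smul_of_val_eq hqq'.2) (hc q q' hne)

end Support

section Extremal

variable {k : Type} [Field k] [CharZero k] {a b : ℕ} {A B : ℕ → ℕ}

def highZeros (a : ℕ) (T : YoungSet b A) : Finset (Fin b) := {p | a ≤ (p : ℕ) ∧ T.1 p = 0}

theorem mem_highZeros {T : YoungSet b A} {p : Fin b} :
    p ∈ highZeros a T ↔ a ≤ (p : ℕ) ∧ T.1 p = 0 := by
  simp [highZeros]

theorem highZeros_swap_smul_of_lt {p q : Fin b} (hp : (p : ℕ) < a) (hq : (q : ℕ) < a)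
    (T : YoungSet b A) : highZeros a (swap p q • T) = highZeros a T := by
  refine filter_congr fun r _ => and_congr_right fun hr => ?_
  rw [YoungSet.smul_val, swap_inv, swap_apply_of_ne_of_ne] <;> rintro rfl <;> omega

theorem card_highZeros_swap_smul {T : YoungSet b A} {ℓ x : Fin b} (hℓ : (ℓ : ℕ) < a)
    (hTℓ : T.1 ℓ = 0) (hx : a ≤ (x : ℕ)) (hTx : T.1 x ≠ 0) :
    #(highZeros a (swap ℓ x • T)) = #(highZeros a T) + 1 := by
  have : highZeros a (swap ℓ x • T) = insert x (highZeros a T) := by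
    ext r
    simp only [mem_highZeros, mem_insert, YoungSet.smul_val, swap_inv]
    by_cases hrx : r = x
    · subst hrx
      simp [hx, hTℓ]
    · by_cases hr : a ≤ (r : ℕ)
      · rw [swap_apply_of_ne_of_ne (by rintro rfl; omega) hrx]
        simp [hrx, hr]
      · simp [hrx, hr]
  rw [this, card_insert_of_notMem (by simp [mem_highZeros, hTx])]

theorem exists_swap_smul_ne_zero (ha : 1 ≤ a) (hab : a ≤ b) {u : YoungSet b A × YoungSet a B →₀ k}
    (hrel : ∀ T S, ∑ x ∈ {x : Fin b | a - 1 ≤ (x : ℕ)}, u (swap ⟨a - 1, by omega⟩ x • T, S) = 0)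
    {T : YoungSet b A} {S : YoungSet a B} (hTS : u (T, S) ≠ 0) (hT : T.1 ⟨a - 1, by omega⟩ = 0) :
    ∃ x : Fin b, a ≤ (x : ℕ) ∧ T.1 x ≠ 0 ∧ u (swap ⟨a - 1, by omega⟩ x • T, S) ≠ 0 := by
  by_contra! h
  have hterm : ∀ x ∈ ({x : Fin b | a - 1 ≤ (x : ℕ)} : Finset (Fin b)),
      u (swap ⟨a - 1, by omega⟩ x • T, S) = if T.1 x = 0 then u (T, S) else 0 := by
    intro x hx
    split_ifs with hx0
    · rw [YoungSet.swap_smul_of_val_eq (hT.trans hx0.symm)]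
    · refine h x ?_ hx0
      have : (x : ℕ) ≠ a - 1 := fun hxℓ =>
        hx0 (by rwa [show x = ⟨a - 1, by omega⟩ from Fin.ext hxℓ])
      simp only [mem_filter, mem_univ, true_and] at hx
      omega
  have hsum := hrel T S
  rw [sum_congr rfl hterm, sum_ite, sum_const_zero, add_zero, sum_const, nsmul_eq_mul] at hsum
  have hpos : 0 < #{x ∈ ({x : Fin b | a - 1 ≤ (x : ℕ)} : Finset (Fin b)) | T.1 x = 0} :=
    card_pos.2 ⟨⟨a - 1, by omega⟩, by simp [hT]; omega⟩
  exact hTS ((mul_eq_zero.1 hsum).resolve_left (Nat.cast_ne_zero.2 hpos.ne'))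

theorem exists_ne_zero_zeros_high (ha : 1 ≤ a) (hab : a ≤ b) {u : YoungSet b A × YoungSet a B →₀ k}
    (hu : u ≠ 0)
    (hmove : ∀ T S, u (T, S) ≠ 0 → ∀ q q' : Fin a,
      ∃ S', u (swap (Fin.castLE hab q) (Fin.castLE hab q') • T, S') ≠ 0)
    (hrel : ∀ T S, ∑ x ∈ {x : Fin b | a - 1 ≤ (x : ℕ)}, u (swap ⟨a - 1, by omega⟩ x • T, S) = 0) :
    ∃ T S, u (T, S) ≠ 0 ∧ ∀ p, T.1 p = 0 → a ≤ (p : ℕ) := by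
  obtain ⟨⟨T, S⟩, hmem, hmax⟩ := exists_max_image u.support (fun y => #(highZeros a y.1))
    (Finsupp.support_nonempty_iff.2 hu)
  refine ⟨T, S, Finsupp.mem_support_iff.1 hmem, fun p hp => ?_⟩
  by_contra! hpa
  obtain ⟨S₁, hS₁⟩ := hmove T S (Finsupp.mem_support_iff.1 hmem) ⟨p, hpa⟩ ⟨a - 1, by omega⟩
  change u (swap p ⟨a - 1, by omega⟩ • T, S₁) ≠ 0 at hS₁
  have hT₁ : (swap p ⟨a - 1, by omega⟩ • T).1 ⟨a - 1, by omega⟩ = 0 := by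
    simpa [YoungSet.smul_val] using hp
  obtain ⟨x, hx, hx0, hx'⟩ := exists_swap_smul_ne_zero ha hab hrel hS₁ hT₁
  have h₁ := card_highZeros_swap_smul (show a - 1 < a by omega) hT₁ hx hx0
  rw [highZeros_swap_smul_of_lt hpa (show a - 1 < a by omega)] at h₁
  have h₂ := hmax _ (Finsupp.mem_support_iff.2 hx')
  dsimp only at h₂
  omega

end Extremal

section Bounds

variable {a b : ℕ} {l m : ℕ → ℕ}

theorem card_filter_castLE (hab : a ≤ b) (P : Fin b → Prop) [DecidablePred P] :
    #{q : Fin a | P (Fin.castLE hab q)} = #{p : Fin b | (p : ℕ) < a ∧ P p} := by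
  rw [← card_map (Fin.castLEEmb hab)]
  congr 1
  ext p
  simp only [mem_map, mem_filter, mem_univ, true_and, Fin.castLEEmb_apply]
  exact ⟨by rintro ⟨q, hq, rfl⟩; exact ⟨q.2, hq⟩, fun ⟨hp, hP⟩ => ⟨⟨p, hp⟩, hP, rfl⟩⟩

theorem card_filter_mem_eq_sum {n : ℕ} (X : Fin n → ℕ) (s : Finset ℕ) :
    #{q | X q ∈ s} = ∑ i ∈ s, #{q | X q = i} := by
  rw [card_eq_sum_card_fiberwise (f := X) (t := s) fun q hq => by simpa using hq]
  refine sum_congr rfl fun i hi => congrArg card ?_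
  ext q
  simp only [mem_filter, mem_univ, true_and]
  exact ⟨And.right, fun h => ⟨h ▸ hi, h⟩⟩

theorem sub_le_of_injOn_high (hab : a ≤ b) (hl : IsPartition l) (T : YoungSet b (transposeP l))
    (hT : Set.InjOn T.1 {p | a ≤ (p : ℕ)}) : b - a ≤ l 0 := by
  rw [← card_filter_le_val hab, ← card_range (l 0)]
  exact card_le_card_of_injOn T.1 (fun p _ => mem_range.2 (T.val_lt hl p))
    fun p hp q hq => hT (by simpa using hp) (by simpa using hq)

theorem le_sub_of_zeros_high (hab : a ≤ b) (T : YoungSet b l)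
    (hT : ∀ p, T.1 p = 0 → a ≤ (p : ℕ)) : l 0 ≤ b - a := by
  rw [← T.card_filter_val_eq 0, ← card_filter_le_val hab]
  exact card_le_card fun p => by simpa using hT p

theorem sum_rowBar_le (hab : a ≤ b) (hl0 : l 0 = b - a) (hm : IsPartition m) (T : YoungSet b l)
    (S : YoungSet a (transposeP m)) (hT : ∀ p, T.1 p = 0 → a ≤ (p : ℕ))
    (hTS : Function.Injective fun q => (T.1 (Fin.castLE hab q), S.1 q)) (n : ℕ) :
    ∑ t ∈ range n, rowBar l t ≤ ∑ t ∈ range n, m t := by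
  have hzeros : ({p | T.1 p = 0} : Finset (Fin b)) = ({p | a ≤ (p : ℕ)} : Finset (Fin b)) :=
    eq_of_subset_of_card_le (fun p hp => by simpa using hT p (by simpa using hp))
      (by rw [card_filter_le_val hab, T.card_filter_val_eq, hl0])
  have hfiber : ∀ i, i ≠ 0 → #{q : Fin a | T.1 (Fin.castLE hab q) = i} = l i := fun i hi => by
    rw [card_filter_castLE hab (fun p => T.1 p = i), ← T.card_filter_val_eq]
    refine congrArg card (filter_congr fun p _ => and_iff_right_of_imp fun hp => ?_)
    by_contra! hpa
    have : T.1 p = 0 := by simpa using (Finset.ext_iff.1 hzeros p).2 (by simpa using hpa)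
    exact hi (hp ▸ this)
  set s := (range n).map (addRightEmbedding 1)
  calc ∑ t ∈ range n, rowBar l t = ∑ i ∈ s, l i := (sum_map (range n) (addRightEmbedding 1) l).symm
    _ = ∑ i ∈ s, #{q : Fin a | T.1 (Fin.castLE hab q) = i} :=
      sum_congr rfl fun i hi => (hfiber i (by simp [s] at hi; omega)).symm
    _ = #{q : Fin a | T.1 (Fin.castLE hab q) ∈ s} := (card_filter_mem_eq_sum _ s).symm
    _ ≤ ∑ t ∈ range #s, m t :=
      card_filter_mem_le_sum_range hm _ _ hTS (fun j => (S.card_filter_val_eq j).le) s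
    _ = ∑ t ∈ range n, m t := by rw [card_map, card_range]

theorem sum_le_sum_rowBar (hab : a ≤ b) (hl0 : l 0 = b - a) (hl : IsPartition l)
    (T : YoungSet b (transposeP l)) (S : YoungSet a m) (hT : Set.InjOn T.1 {p | a ≤ (p : ℕ)})
    (hTS : Function.Injective fun q => (T.1 (Fin.castLE hab q), S.1 q)) (n : ℕ) :
    ∑ t ∈ range n, m t ≤ ∑ t ∈ range n, rowBar l t := by
  have hsurj : ∀ j < l 0, ∃ p : Fin b, a ≤ (p : ℕ) ∧ T.1 p = j := fun j hj => by
    obtain ⟨p, hp, hpj⟩ := surj_on_of_inj_on_of_card_le (s := {p : Fin b | a ≤ (p : ℕ)})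
      (fun p _ => T.1 p) (fun p _ => mem_range.2 (T.val_lt hl p))
      (fun p q hp hq => hT (by simpa using hp) (by simpa using hq))
      (by rw [card_range, card_filter_le_val hab, hl0]) j (mem_range.2 hj)
    exact ⟨p, by simpa using hp, hpj.symm⟩
  have hfiber : ∀ j, #{q : Fin a | T.1 (Fin.castLE hab q) = j} ≤ transposeP (rowBar l) j := by
    intro j
    have hsub : ({p | (p : ℕ) < a ∧ T.1 p = j} : Finset (Fin b)) ⊆ ({p | T.1 p = j} : Finset _) :=
      monotone_filter_right _ fun _ _ => And.right
    rw [hl.transposeP_rowBar, card_filter_castLE hab (fun p => T.1 p = j), ← T.card_filter_val_eq]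
    rcases lt_or_ge j (l 0) with hj | hj
    · obtain ⟨p, hpa, hpj⟩ := hsurj j hj
      have := card_lt_card <| (ssubset_iff_of_subset hsub).2 ⟨p, by simp [hpj], by simp; omega⟩
      omega
    · have : transposeP l j = 0 := by
        by_contra h
        exact absurd ((hl.lt_transposeP_iff j 0).1 (Nat.pos_of_ne_zero h)) (not_lt.2 hj)
      have := card_le_card hsub
      rw [T.card_filter_val_eq] at this ⊢
      omega
  calc ∑ t ∈ range n, m t = ∑ t ∈ range n, #{q | S.1 q = t} :=
        sum_congr rfl fun t _ => (S.card_filter_val_eq t).symm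
    _ = #{q | S.1 q ∈ range n} := (card_filter_mem_eq_sum _ _).symm
    _ ≤ ∑ t ∈ range #(range n), rowBar l t :=
      card_filter_mem_le_sum_range hl.rowBar _ _ (Prod.swap_injective.comp hTS) hfiber _
    _ = ∑ t ∈ range n, rowBar l t := by rw [card_range]

theorem eq_of_forall_sum_range_eq {f g : ℕ → ℕ} (h : ∀ n, ∑ t ∈ range n, f t = ∑ t ∈ range n, g t) :
    f = g := funext fun t => by
  have := h (t + 1)
  rw [sum_range_succ, sum_range_succ, h t] at this
  omega

end Bounds

section Occurrence

variable {k : Type} [Field k] [CharZero k] {a b : ℕ} {V W : Type} [AddCommGroup V] [Module k V]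
  [AddCommGroup W] [Module k W] {ρ : Representation k (Perm (Fin b)) V}
  {σ : Representation k (Perm (Fin a)) W} {A B l m : ℕ → ℕ} {α : V →ₗ[k] (YoungSet b A →₀ k)}
  {β : W →ₗ[k] (YoungSet a B →₀ k)} {w : V ⊗[k] W}

theorem exists_young_injOn_high (hab : a ≤ b)
    (hα : IsTwistedPermMap k ρ (fun g => ((Perm.sign g : ℤ) : k)) α) (hβ : IsTwistedPermMap k σ 1 β)
    (hαinj : Function.Injective α) (hβinj : Function.Injective β) (hw0 : w ≠ 0)
    (hw : ∀ g h, (g, h) • Fin.castLEEmb hab = Fin.castLEEmb hab → boxtimes ρ σ (g, h) w = w) :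
    ∃ (T : YoungSet b A) (S : YoungSet a B), Set.InjOn T.1 {p | a ≤ (p : ℕ)} ∧
      Function.Injective fun q => (T.1 (Fin.castLE hab q), S.1 q) := by
  obtain ⟨⟨T, S⟩, hTS⟩ :=
    DFunLike.ne_iff.1 ((map_ne_zero_iff _ (tensorFinsupp_injective hαinj hβinj)).2 hw0)
  exact ⟨T, S,
    injOn_high_of_tensorFinsupp_ne_zero hab hα hβ hw
      (fun p q hpq => by simp [Perm.sign_swap hpq]) hTS,
    pair_injective_of_tensorFinsupp_ne_zero hab hα hβ hw
      (fun q q' hqq' => by simp [Perm.sign_swap ((Fin.castLE_injective hab).ne hqq')]) hTS⟩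

theorem exists_young_zeros_high (ha : 1 ≤ a) (hab : a ≤ b) (hα : IsTwistedPermMap k ρ 1 α)
    (hβ : IsTwistedPermMap k σ (fun h => ((Perm.sign h : ℤ) : k)) β)
    (hαinj : Function.Injective α) (hβinj : Function.Injective β) (hw0 : w ≠ 0)
    (hw : ∀ g h, (g, h) • Fin.castLEEmb hab = Fin.castLEEmb hab → boxtimes ρ σ (g, h) w = w)
    (hrel : ∑ x ∈ {x : Fin b | a - 1 ≤ (x : ℕ)}, boxtimes ρ σ (swap ⟨a - 1, by omega⟩ x, 1) w = 0) :
    ∃ (T : YoungSet b A) (S : YoungSet a B), (∀ p, T.1 p = 0 → a ≤ (p : ℕ)) ∧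
      Function.Injective fun q => (T.1 (Fin.castLE hab q), S.1 q) := by
  have hmove : ∀ T S, tensorFinsupp α β w (T, S) ≠ 0 → ∀ q q' : Fin a,
      ∃ S', tensorFinsupp α β w (swap (Fin.castLE hab q) (Fin.castLE hab q') • T, S') ≠ 0 := by
    intro T S hTS q q'
    refine ⟨swap q q' • S, ?_⟩
    have := hα.tensorFinsupp_boxtimes_apply hβ
      (swap (Fin.castLE hab q) (Fin.castLE hab q')) (swap q q') w T S
    rw [hw _ _ (swap_smul_castLEEmb hab q q')] at this
    rw [this]
    rcases Int.units_eq_one_or (Perm.sign (swap q q')) with h | h <;> simp [h, hTS]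
  have hrel' : ∀ T S, ∑ x ∈ {x : Fin b | a - 1 ≤ (x : ℕ)},
      tensorFinsupp α β w (swap ⟨a - 1, by omega⟩ x • T, S) = 0 := fun T S => by
    have := congrArg (fun t => tensorFinsupp α β t (T, S)) hrel
    simp only [map_sum, Finsupp.finsetSum_apply, map_zero, Finsupp.coe_zero, Pi.zero_apply] at this
    rw [← this]
    refine sum_congr rfl fun x _ => ?_
    have := hα.tensorFinsupp_boxtimes_apply hβ (swap ⟨a - 1, by omega⟩ x) 1 w
      (swap ⟨a - 1, by omega⟩ x • T) S
    rw [smul_smul, swap_mul_self, one_smul, one_smul] at this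
    simp [this]
  obtain ⟨T, S, hTS, hT⟩ := exists_ne_zero_zeros_high ha hab
    ((map_ne_zero_iff _ (tensorFinsupp_injective hαinj hβinj)).2 hw0) hmove hrel'
  exact ⟨T, S, hT, pair_injective_of_tensorFinsupp_ne_zero hab hα hβ hw
    (fun q q' hqq' => by simp [Perm.sign_swap hqq']) hTS⟩

theorem rowBar_eq_of_not_occursInInduced (ha : 1 ≤ a) (hab : a ≤ b) (hl : IsPartition l)
    (hm : IsPartition m) (hρ : IsSpechtRep k ρ l) (hσ : IsSpechtRep k σ m)
    {φ : ((Fin a ↪ Fin b) →₀ k) →ₗ[k] V ⊗[k] W} (hφ0 : φ ≠ 0)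
    (hφ : ∀ g x, φ (x.mapDomain (g • ·)) = boxtimes ρ σ g (φ x))
    (hnot : ¬ OccursInInduced ρ σ) :
    m = rowBar l ∧ l 0 = b - a := by
  obtain ⟨φV, hφVinj, hφV⟩ := hρ.exists_injective_young
  obtain ⟨ψV, hψVinj, hψV⟩ := hρ.exists_injective_young_transposeP
  obtain ⟨φW, hφWinj, hφW⟩ := hσ.exists_injective_young
  obtain ⟨ψW, hψWinj, hψW⟩ := hσ.exists_injective_young_transposeP
  set w := φ (Finsupp.single (Fin.castLEEmb hab) 1)
  have hw0 : w ≠ 0 := fun h => hφ0 (eq_zero_of_apply_single_eq_zero _ hφ h)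
  have hw : ∀ g h, (g, h) • Fin.castLEEmb hab = Fin.castLEEmb hab → boxtimes ρ σ (g, h) w = w :=
    fun g h hgh => by rw [← hφ, Finsupp.mapDomain_single, hgh]
  obtain ⟨T₃, S₃, hT₃, hTS₃⟩ := exists_young_injOn_high hab hψV hφW hψVinj hφWinj hw0 hw
  obtain ⟨T₂, S₂, hT₂, hTS₂⟩ := exists_young_zeros_high ha hab hφV hψW hφVinj hψWinj hw0 hw
    (sum_boxtimes_swap_eq_zero ha hab hφ hnot)
  have hl0 : l 0 = b - a :=
    le_antisymm (le_sub_of_zeros_high hab T₂ hT₂) (sub_le_of_injOn_high hab hl T₃ hT₃)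
  refine ⟨eq_of_forall_sum_range_eq fun n => le_antisymm ?_ ?_, hl0⟩
  · exact sum_le_sum_rowBar hab hl0 hl T₃ S₃ hT₃ hTS₃ n
  · exact sum_rowBar_le hab hl0 hm T₂ S₂ hT₂ hTS₂ n

theorem not_occursInInduced_of_firstRow_eq (ha : 1 ≤ a) (hab : a ≤ b) (hl : IsPartition l)
    (hl0 : l 0 = b - a) (hρ : IsSpechtRep k ρ l) (hσ : IsSpechtRep k σ m) :
    ¬ OccursInInduced ρ σ := by
  rintro ⟨ψ, hψ0, hψ⟩
  obtain ⟨ψV, hψVinj, hψV⟩ := hρ.exists_injective_young_transposeP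
  obtain ⟨φW, hφWinj, hφW⟩ := hσ.exists_injective_young
  obtain ⟨f, hf⟩ : ∃ f, ψ (Finsupp.single f 1) ≠ 0 := by
    by_contra! h
    exact hψ0 (Finsupp.lhom_ext' fun f => LinearMap.ext_ring (h f))
  obtain ⟨⟨T, S⟩, hTS⟩ :=
    DFunLike.ne_iff.1 ((map_ne_zero_iff _ (tensorFinsupp_injective hψVinj hφWinj)).2 hf)
  have hcard : #(range (l 0)) < #({p | p ∉ Set.range f} : Finset (Fin b)) := by
    rw [show ({p | p ∉ Set.range f} : Finset (Fin b)) = (univ.map f)ᶜ by ext; simp, card_compl,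
      card_map, card_univ, Fintype.card_fin, Fintype.card_fin, card_range, hl0]
    omega
  obtain ⟨p, hp, q, hq, hpq, hT⟩ :=
    exists_ne_map_eq_of_card_lt_of_maps_to hcard fun p _ => mem_range.2 (T.val_lt hl p)
  refine hTS (hψV.tensorFinsupp_apply_eq_zero hφW ?_ (YoungSet.swap_smul_of_val_eq hT)
    (one_smul _ _) (by simp [Perm.sign_swap hpq]))
  rw [← map_one (extPerm (Nat.sub_le a 1)), ← hψ, Finsupp.mapDomain_single,
    swap_smul_embedding_eq_self (by simpa using hp) (by simpa using hq)]

end Occurrence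

/-- For `1 ≤ a ≤ b` and `λ ⊢ b`, `ν ⊢ a` in characteristic zero: a simple module
`S^λ ⊠ S^ν` occurring in `k[Hom_FI(a,b)]` fails to occur as a composition factor of
`Ind_{S_b × S_{a-1}}^{S_b × S_a} k[Hom_FI(a-1,b)]` if and only if `ν = λ̄` and
`λ_1 = b - a`.  (By Frobenius reciprocity in the semisimple situation, occurrence in the
induced module is expressed as the existence of a nonzero `S_b × S_{a-1}`-equivariant
map `k[Hom_FI(a-1,b)] → S^λ ⊠ S^ν`, where `S_{a-1}` acts on `S^ν` via `S_{a-1} ⊆ S_a`.) -/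
theorem stmt14 (k : Type) [Field k] [CharZero k] (a b : ℕ) (ha : 1 ≤ a) (hab : a ≤ b)
    (l m : ℕ → ℕ) (hl : IsPartitionOfSize l b) (hm : IsPartitionOfSize m a)
    (V W : Type) [AddCommGroup V] [Module k V] [AddCommGroup W] [Module k W]
    (ρ : Representation k (Equiv.Perm (Fin b)) V)
    (σ : Representation k (Equiv.Perm (Fin a)) W)
    (hρ : IsSpechtRep k ρ l) (hσ : IsSpechtRep k σ m)
    (hoccur : ∃ φ : ((Fin a ↪ Fin b) →₀ k) →ₗ[k] TensorProduct k V W, φ ≠ 0 ∧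
      ∀ (g : Equiv.Perm (Fin b) × Equiv.Perm (Fin a)) (x : (Fin a ↪ Fin b) →₀ k),
        φ (MonoidAlgebra.coeffLinearEquiv k (Representation.ofMulAction k (Equiv.Perm (Fin b) × Equiv.Perm (Fin a))
            (Fin a ↪ Fin b) g ((MonoidAlgebra.coeffLinearEquiv k).symm x))) = (boxtimes ρ σ) g (φ x)) :
    (¬ ∃ ψ : ((Fin (a - 1) ↪ Fin b) →₀ k) →ₗ[k] TensorProduct k V W, ψ ≠ 0 ∧
      ∀ (g : Equiv.Perm (Fin b)) (h : Equiv.Perm (Fin (a - 1)))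
        (x : (Fin (a - 1) ↪ Fin b) →₀ k),
        ψ (MonoidAlgebra.coeffLinearEquiv k (Representation.ofMulAction k (Equiv.Perm (Fin b) × Equiv.Perm (Fin (a - 1)))
            (Fin (a - 1) ↪ Fin b) (g, h) ((MonoidAlgebra.coeffLinearEquiv k).symm x))) =
          (boxtimes ρ σ) (g, extPerm (Nat.sub_le a 1) h) (ψ x)) ↔
    (m = rowBar l ∧ l 0 = b - a) := by
  simp only [coeffLinearEquiv_ofMulAction] at hoccur ⊢
  obtain ⟨φ, hφ0, hφ⟩ := hoccur
  exact ⟨rowBar_eq_of_not_occursInInduced ha hab hl.1 hm.1 hρ hσ hφ0 hφ,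
    fun ⟨_, hl0⟩ => not_occursInInduced_of_firstRow_eq ha hab hl.1 hl0 hρ hσ⟩
end
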